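/- With the definitions of C, O_ℓ, U_ℓ, D and T made from the run of BinarySearchMechanism(N \ {i}, M, ψ) with fixed rounds r_{−i}, if the valuation v_i of bidder i is subadditive, then for every set S ⊆ S_i*, the following holds in the actual mechanism BinarySearchMechanism(N, M, ψ) with bidder i included: E_{r*, r_i}[Utility_i | r_{−i}] ≥ (1/(β+1)²)·(v_i(S \ T) − q(S \ T)), where Utility_i refers to the FixedPriceAuction that produced the final allocation (Utility_i = 0 if bidder i does not participate in it) and q(S \ T) = Σ_{e∈S\T} q_e. -/

import Mathlib

open Finset

variable {ι : Type} [Fintype ι] [DecidableEq ι] {B : Type} [DecidableEq B]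

/-- Sum of the prices of the items in `S`. -/
def priceOf (p : ι → ℝ) (S : Finset ι) : ℝ := ∑ e ∈ S, p e

/-- A (normalized, monotone) valuation. -/
def IsValuation (v : Finset ι → ℝ) : Prop :=
  v ∅ = 0 ∧ ∀ S T : Finset ι, S ⊆ T → v S ≤ v T

/-- A subadditive set function. -/
def SubadditiveVal (v : Finset ι → ℝ) : Prop :=
  ∀ S T : Finset ι, v (S ∪ T) ≤ v S + v T

/-- `D` is a demand oracle for valuation `v` at prices `p`: on any set `R` of available
items it returns a subset of `R` maximizing utility. -/
def IsDemandOracle (v : Finset ι → ℝ) (p : ι → ℝ) (D : Finset ι → Finset ι) : Prop :=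
  ∀ R : Finset ι, D R ⊆ R ∧ ∀ T ⊆ R, v T - priceOf p T ≤ v (D R) - priceOf p (D R)

/-- The bundle received by bidder `i` in the fixed price auction processing the ordered
list `L` of bidders with available items `R`, where bidder `j` uses demand oracle `Dem j`. -/
def FPAalloc (Dem : B → Finset ι → Finset ι) : List B → Finset ι → B → Finset ι
  | [], _, _ => ∅
  | j :: L, R, i => if i = j then Dem j R else FPAalloc Dem L (R \ Dem j R) i

/-- The set of items allocated (to some bidder) in the fixed price auction. -/
def FPAsold (Dem : B → Finset ι → Finset ι) : List B → Finset ι → Finset ι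
  | [], _ => ∅
  | j :: L, R => Dem j R ∪ FPAsold Dem L (R \ Dem j R)

/-- The candidate price set `B = {0} ∪ {2^(j-K)·ψ : j = 0,…,K-1}` where `K = 3⌈log₂ m⌉`. -/
def candB (m : ℕ) (ψ : ℝ) : Set ℝ :=
  insert 0 {x : ℝ | ∃ j < 3 * Nat.clog 2 m, x = 2 ^ j * ψ / 2 ^ (3 * Nat.clog 2 m)}

/-- Bidder with valuation `v` satisfies the `α`-price guarantee on `U`. -/
def PriceGuarantee (v : Finset ι → ℝ) (U : Finset ι) (α : ℝ) : Prop :=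
  ∃ (lam : Finset ι → ℝ) (q : ι → ℝ),
    (∀ S, 0 ≤ lam S) ∧ (∑ S ∈ U.powerset, lam S = 1) ∧ (∀ e ∈ U, 0 ≤ q e) ∧
    ∀ T ⊆ U, (1 / α) * v U - priceOf q T ≤
      ∑ S ∈ U.powerset, lam S * (v (S \ T) - priceOf q S)

/-- The group of bidders participating in round `ℓ` (in the order of `N`). -/
def BSMgroup (N : List B) (r : B → ℕ) (ℓ : ℕ) : List B := N.filter fun i => r i = ℓ

/-- The offset (into the sorted vector `b` of `2^β` candidate prices) of the block of
remaining candidate prices of each item at the beginning of round `ℓ` (rounds are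
`0`-indexed: the binary search rounds are `0,…,β-1` and the final round is `β`). -/
def BSMoff (Dem : B → (ι → ℝ) → Finset ι → Finset ι) (N : List B) (r : B → ℕ)
    (b : ℕ → ℝ) (β : ℕ) : ℕ → ι → ℕ
  | 0, _ => 0
  | ℓ + 1, e =>
    if e ∈ FPAsold
        (fun i => Dem i fun e' => b (BSMoff Dem N r b β ℓ e' + 2 ^ (β - ℓ - 1)))
        (BSMgroup N r ℓ) Finset.univ
    then BSMoff Dem N r b β ℓ e + 2 ^ (β - ℓ - 1)
    else BSMoff Dem N r b β ℓ e

/-- The price vector used in round `ℓ` of the binary search mechanism: for `ℓ < β` the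
middle entry of the remaining block of candidate prices, and for the final round `β`
the unique remaining candidate price. -/
def BSMprice (Dem : B → (ι → ℝ) → Finset ι → Finset ι) (N : List B) (r : B → ℕ)
    (b : ℕ → ℝ) (β ℓ : ℕ) : ι → ℝ :=
  fun e =>
    if ℓ < β then b (BSMoff Dem N r b β ℓ e + 2 ^ (β - ℓ - 1))
    else b (BSMoff Dem N r b β β e)

/-- The bundle received by bidder `i` in the final allocation of the binary search
mechanism when the final allocation round is `ℓstar`. -/
def BSMfinalAlloc (Dem : B → (ι → ℝ) → Finset ι → Finset ι) (N : List B) (r : B → ℕ)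
    (b : ℕ → ℝ) (β ℓstar : ℕ) (i : B) : Finset ι :=
  FPAalloc (fun j => Dem j (BSMprice Dem N r b β ℓstar)) (BSMgroup N r ℓstar) Finset.univ i

/-- The welfare of the final allocation of the binary search mechanism. -/
def BSMwelfare (v : B → Finset ι → ℝ) (Dem : B → (ι → ℝ) → Finset ι → Finset ι)
    (N : List B) (r : B → ℕ) (b : ℕ → ℝ) (β ℓstar : ℕ) : ℝ :=
  ((BSMgroup N r ℓstar).map fun i => v i (BSMfinalAlloc Dem N r b β ℓstar i)).sum

/-- The set of items sold in the fixed price auction of round `ℓ`. -/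
def BSMsold (Dem : B → (ι → ℝ) → Finset ι → Finset ι) (N : List B) (r : B → ℕ)
    (b : ℕ → ℝ) (β ℓ : ℕ) : Finset ι :=
  FPAsold (fun j => Dem j (BSMprice Dem N r b β ℓ)) (BSMgroup N r ℓ) Finset.univ

/-- The revenue obtained from the items of `S` in the final allocation (round `ℓstar`). -/
def BSMrev (Dem : B → (ι → ℝ) → Finset ι → Finset ι) (N : List B) (r : B → ℕ)
    (b : ℕ → ℝ) (β : ℕ) (S : Finset ι) (ℓstar : ℕ) : ℝ :=
  priceOf (BSMprice Dem N r b β ℓstar) (S ∩ BSMsold Dem N r b β ℓstar)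

/-- The utility of bidder `i` in the final allocation (zero if `i` does not take part in
the fixed price auction that produced the final allocation). -/
def BSMutility (v : B → Finset ι → ℝ) (Dem : B → (ι → ℝ) → Finset ι → Finset ι)
    (N : List B) (r : B → ℕ) (b : ℕ → ℝ) (β : ℕ) (i : B) (ℓstar : ℕ) : ℝ :=
  if r i = ℓstar then
    v i (BSMfinalAlloc Dem N r b β ℓstar i)
      - priceOf (BSMprice Dem N r b β ℓstar) (BSMfinalAlloc Dem N r b β ℓstar i)
  else 0

open scoped Classical

/-- Item `e` is *oversold* at round `ℓ` (w.r.t. the intended prices `q`): it is allocated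
in the round-`ℓ` fixed price auction although its round-`ℓ` price exceeds `q e`. -/
def OverAt (Dem : B → (ι → ℝ) → Finset ι → Finset ι) (N : List B) (r : B → ℕ)
    (b : ℕ → ℝ) (β : ℕ) (q : ι → ℝ) (ℓ : ℕ) (e : ι) : Prop :=
  e ∈ BSMsold Dem N r b β ℓ ∧ q e < BSMprice Dem N r b β ℓ e

/-- Item `e` is *undersold* at round `ℓ`: it is not allocated in the round-`ℓ` fixed
price auction although its round-`ℓ` price is at most `q e`. -/
def UnderAt (Dem : B → (ι → ℝ) → Finset ι → Finset ι) (N : List B) (r : B → ℕ)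
    (b : ℕ → ℝ) (β : ℕ) (q : ι → ℝ) (ℓ : ℕ) (e : ι) : Prop :=
  e ∉ BSMsold Dem N r b β ℓ ∧ BSMprice Dem N r b β ℓ e ≤ q e

/-- `O_ℓ`: the items of `Sstar` for which `ℓ` is the smallest round at which they are
allocated at a price exceeding their intended price. -/
noncomputable def Oset (Dem : B → (ι → ℝ) → Finset ι → Finset ι) (N : List B) (r : B → ℕ)
    (b : ℕ → ℝ) (β : ℕ) (q : ι → ℝ) (Sstar : Finset ι) (ℓ : ℕ) : Finset ι :=
  Sstar.filter fun e =>
    OverAt Dem N r b β q ℓ e ∧ ∀ ℓ' < ℓ, ¬ OverAt Dem N r b β q ℓ' e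

/-- `U_ℓ`: the items of `Sstar` for which `ℓ` is the smallest round at which they remain
unallocated at a price of at most their intended price. -/
noncomputable def Uset (Dem : B → (ι → ℝ) → Finset ι → Finset ι) (N : List B) (r : B → ℕ)
    (b : ℕ → ℝ) (β : ℕ) (q : ι → ℝ) (Sstar : Finset ι) (ℓ : ℕ) : Finset ι :=
  Sstar.filter fun e =>
    UnderAt Dem N r b β q ℓ e ∧ ∀ ℓ' < ℓ, ¬ UnderAt Dem N r b β q ℓ' e

/-- `C`: the items of `Sstar` whose final (round `β`) price equals their intended price. -/
noncomputable def Cset (Dem : B → (ι → ℝ) → Finset ι → Finset ι) (N : List B) (r : B → ℕ)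
    (b : ℕ → ℝ) (β : ℕ) (q : ι → ℝ) (Sstar : Finset ι) : Finset ι :=
  Sstar.filter fun e => BSMprice Dem N r b β β e = q e

/-- `D`: the items of `C` that, in the final-round fixed price auction, are allocated to
bidders satisfying `P` (the bidders preceding the distinguished bidder in the order of
`N`; these form a prefix of the final group). -/
noncomputable def Dset (Dem : B → (ι → ℝ) → Finset ι → Finset ι) (N : List B) (r : B → ℕ)
    (b : ℕ → ℝ) (β : ℕ) (q : ι → ℝ) (Sstar : Finset ι) (P : B → Prop) : Finset ι :=
  (Cset Dem N r b β q Sstar).filter fun e =>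
    e ∈ FPAsold (fun j => Dem j (BSMprice Dem N r b β β))
        ((BSMgroup N r β).filter fun j => P j) Finset.univ

/-- `T = O_1 ∪ ⋯ ∪ O_β ∪ D`. -/
noncomputable def Tset (Dem : B → (ι → ℝ) → Finset ι → Finset ι) (N : List B) (r : B → ℕ)
    (b : ℕ → ℝ) (β : ℕ) (q : ι → ℝ) (Sstar : Finset ι) (P : B → Prop) : Finset ι :=
  (Finset.range β).biUnion (Oset Dem N r b β q Sstar) ∪ Dset Dem N r b β q Sstar P

/-!
Split `W = S \ T` by the round `τ` in which bidder `i₀` can profit from each item: the first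
binary-search round in which the item is undersold by the run without `i₀`, or the final round
if there is none. Before `i₀`'s own round, and among `i₀`'s predecessors within it, the
mechanism runs exactly as without `i₀`. So when `r_{i₀} = r* = τ`, every item of the part `W_τ`
is still available to `i₀` at a price at most `q`: an undersold item was taken by nobody in
round `τ` of the run without `i₀`; an item never undersold is never oversold either (else it
would lie in some `O_ℓ`), so binary search ends exactly at `q e`, and it escapes `i₀`'s
predecessors because it is not in `D`. Demand optimality then gives utility at least
`v(W_τ) - q(W_τ)`, and subadditivity of `v_{i₀}` sums these bounds to `v(W) - q(W)`.
-/

section FixedPriceAuction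

omit [Fintype ι]

variable (Dem : B → Finset ι → Finset ι)

omit [DecidableEq B] in
theorem FPAsold_append (L₁ L₂ : List B) (R : Finset ι) :
    FPAsold Dem (L₁ ++ L₂) R = FPAsold Dem L₁ R ∪ FPAsold Dem L₂ (R \ FPAsold Dem L₁ R) := by
  induction L₁ generalizing R with
  | nil => simp [FPAsold]
  | cons j L ih =>
    simp only [List.cons_append, FPAsold, ih, union_assoc, sdiff_sdiff_left, sup_eq_union]

omit [DecidableEq B] in
theorem FPAsold_subset_append (L₁ L₂ : List B) (R : Finset ι) :
    FPAsold Dem L₁ R ⊆ FPAsold Dem (L₁ ++ L₂) R := by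
  rw [FPAsold_append]
  exact subset_union_left

theorem FPAalloc_append_cons {L₁ : List B} {i : B} (hi : i ∉ L₁) (L₂ : List B)
    (R : Finset ι) :
    FPAalloc Dem (L₁ ++ i :: L₂) R i = Dem i (R \ FPAsold Dem L₁ R) := by
  induction L₁ generalizing R with
  | nil => simp [FPAalloc, FPAsold]
  | cons j L ih =>
    rw [List.mem_cons, not_or] at hi
    simp only [List.cons_append, FPAalloc, if_neg hi.1, ih hi.2, FPAsold, sdiff_sdiff_left,
      sup_eq_union]

end FixedPriceAuction

theorem List.Pairwise.exists_eq_append_cons {α : Type*} [Preorder α] {l : List α}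
    (hl : l.Pairwise (· < ·)) {a : α} (ha : a ∈ l) :
    ∃ s t, l = s ++ a :: t ∧ (∀ x ∈ s, x < a) ∧ ∀ y ∈ t, a < y := by
  obtain ⟨s, t, rfl⟩ := List.append_of_mem ha
  rw [List.pairwise_append, List.pairwise_cons] at hl
  exact ⟨s, t, rfl, fun x hx => hl.2.2 x hx a List.mem_cons_self, hl.2.1.1⟩

section BidderRound

variable {s t : List B} {i : B} {r r' : B → ℕ}

theorem filter_ne_append_cons (hs : i ∉ s) (ht : i ∉ t) :
    (s ++ i :: t).filter (fun j => j ≠ i) = s ++ t := by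
  rw [List.filter_append, List.filter_cons_of_neg (by simp), List.filter_eq_self.2,
    List.filter_eq_self.2]
  · exact fun j hj => by simpa using ne_of_mem_of_not_mem hj ht
  · exact fun j hj => by simpa using ne_of_mem_of_not_mem hj hs

theorem BSMgroup_filter_ne (N : List B) (hr : ∀ j ≠ i, r j = r' j) {u : ℕ} (hu : r i ≠ u) :
    BSMgroup N r u = BSMgroup (N.filter (fun j => j ≠ i)) r' u := by
  unfold BSMgroup
  rw [List.filter_filter]
  refine List.filter_congr fun j _ => ?_
  by_cases hj : j = i
  · subst hj; simp [hu]
  · simp [hj, hr j hj]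

omit [DecidableEq B] in
theorem BSMgroup_append_cons_self (hs : i ∉ s) (hr : ∀ j ≠ i, r j = r' j) :
    BSMgroup (s ++ i :: t) r (r i) = BSMgroup s r' (r i) ++ i :: BSMgroup t r (r i) := by
  unfold BSMgroup
  rw [List.filter_append, List.filter_cons_of_pos (by simp)]
  congr 1
  exact List.filter_congr fun j hj => by rw [hr j (ne_of_mem_of_not_mem hj hs)]

omit [DecidableEq B] in
theorem BSMgroup_append_filter_lt [LinearOrder B] (hs : ∀ j ∈ s, j < i) (ht : ∀ j ∈ t, i < j)
    (r : B → ℕ) (u : ℕ) :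
    (BSMgroup (s ++ t) r u).filter (fun j => j < i) = BSMgroup s r u := by
  have hs' : (BSMgroup s r u).filter (fun j => j < i) = BSMgroup s r u :=
    List.filter_eq_self.2 fun j hj => by simpa using hs j (List.mem_of_mem_filter hj)
  have ht' : (BSMgroup t r u).filter (fun j => j < i) = [] :=
    List.filter_eq_nil_iff.2 fun j hj => by simpa using (ht j (List.mem_of_mem_filter hj)).le
  rw [BSMgroup, List.filter_append, List.filter_append]
  exact (congrArg₂ (· ++ ·) hs' ht').trans (List.append_nil _)

end BidderRound

section BinarySearch

omit [DecidableEq B]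

variable (Dem : B → (ι → ℝ) → Finset ι → Finset ι) (b : ℕ → ℝ) (β : ℕ)

theorem BSMoff_congr {N N' : List B} {r r' : B → ℕ} {ℓ : ℕ}
    (hg : ∀ u < ℓ, BSMgroup N r u = BSMgroup N' r' u) :
    BSMoff Dem N r b β ℓ = BSMoff Dem N' r' b β ℓ := by
  induction ℓ with
  | zero => rfl
  | succ ℓ ih =>
    funext e
    simp only [BSMoff, ih fun u hu => hg u (Nat.lt_succ_of_lt hu), hg ℓ (Nat.lt_succ_self ℓ)]

theorem BSMprice_congr {N N' : List B} {r r' : B → ℕ} {ℓ : ℕ} (hℓ : ℓ ≤ β)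
    (hg : ∀ u < ℓ, BSMgroup N r u = BSMgroup N' r' u) :
    BSMprice Dem N r b β ℓ = BSMprice Dem N' r' b β ℓ := by
  funext e
  obtain hlt | rfl := hℓ.lt_or_eq
  · simp only [BSMprice, if_pos hlt, BSMoff_congr Dem b β hg]
  · simp only [BSMprice, lt_irrefl, if_false, BSMoff_congr Dem b ℓ hg]

variable (N : List B) (r : B → ℕ)

theorem BSMprice_of_lt {ℓ : ℕ} (hℓ : ℓ < β) :
    BSMprice Dem N r b β ℓ = fun e => b (BSMoff Dem N r b β ℓ e + 2 ^ (β - ℓ - 1)) :=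
  funext fun _ => if_pos hℓ

theorem BSMoff_succ {ℓ : ℕ} (hℓ : ℓ < β) (e : ι) :
    BSMoff Dem N r b β (ℓ + 1) e =
      if e ∈ BSMsold Dem N r b β ℓ then BSMoff Dem N r b β ℓ e + 2 ^ (β - ℓ - 1)
      else BSMoff Dem N r b β ℓ e := by
  rw [BSMsold, BSMprice_of_lt Dem b β N r hℓ]
  rfl

variable {b β} {q : ι → ℝ} {e : ι} {j : ℕ}

theorem BSMoff_bracket (hb : StrictMonoOn b (Set.Iio (2 ^ β))) (hj : j < 2 ^ β)
    (hbj : b j = q e)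
    (h : ∀ ℓ < β, ¬ OverAt Dem N r b β q ℓ e ∧ ¬ UnderAt Dem N r b β q ℓ e) :
    ∀ ℓ ≤ β, BSMoff Dem N r b β ℓ e ≤ j ∧ j < BSMoff Dem N r b β ℓ e + 2 ^ (β - ℓ) ∧
      BSMoff Dem N r b β ℓ e + 2 ^ (β - ℓ) ≤ 2 ^ β := by
  intro ℓ hℓ
  induction ℓ with
  | zero => simp [BSMoff, hj]
  | succ ℓ ih =>
    have hℓβ : ℓ < β := hℓ
    obtain ⟨hlo, hhi, htop⟩ := ih hℓβ.le
    set o := BSMoff Dem N r b β ℓ e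
    set w := 2 ^ (β - ℓ - 1)
    have hw : 2 ^ (β - ℓ) = w + w := by
      rw [← two_mul, ← pow_succ']; congr 1; omega
    have hw' : β - (ℓ + 1) = β - ℓ - 1 := by omega
    have hmid : o + w ∈ Set.Iio (2 ^ β) := by
      have : 0 < w := by positivity
      simp only [Set.mem_Iio]; omega
    have hprice : BSMprice Dem N r b β ℓ e = b (o + w) := by simp [BSMprice, hℓβ, o, w]
    rw [BSMoff_succ Dem b β N r hℓβ, hw']
    split_ifs with hsold
    · have : o + w ≤ j := (hb.le_iff_le hmid hj).1 <| by
        rw [hbj, ← hprice]; exact not_lt.1 fun hlt => (h ℓ hℓβ).1 ⟨hsold, hlt⟩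
      omega
    · have : j < o + w := (hb.lt_iff_lt hj hmid).1 <| by
        rw [hbj, ← hprice]; exact not_le.1 fun hle => (h ℓ hℓβ).2 ⟨hsold, hle⟩
      omega

theorem BSMprice_final_eq (hb : StrictMonoOn b (Set.Iio (2 ^ β))) (hj : j < 2 ^ β)
    (hbj : b j = q e)
    (h : ∀ ℓ < β, ¬ OverAt Dem N r b β q ℓ e ∧ ¬ UnderAt Dem N r b β q ℓ e) :
    BSMprice Dem N r b β β e = q e := by
  obtain ⟨hlo, hhi, -⟩ := BSMoff_bracket Dem N r hb hj hbj h β le_rfl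
  rw [Nat.sub_self, pow_zero] at hhi
  simp only [BSMprice, lt_irrefl, if_false, le_antisymm hlo (Nat.lt_succ_iff.1 hhi), hbj]

end BinarySearch

omit [DecidableEq B] in
theorem mem_biUnion_Oset_of_overAt {Dem : B → (ι → ℝ) → Finset ι → Finset ι} {N : List B}
    {r : B → ℕ} {b : ℕ → ℝ} {β : ℕ} {q : ι → ℝ} {Sstar : Finset ι} {e : ι} (he : e ∈ Sstar)
    {ℓ : ℕ} (hℓ : ℓ < β) (h : OverAt Dem N r b β q ℓ e) :
    e ∈ (range β).biUnion (Oset Dem N r b β q Sstar) := by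
  have hex : ∃ ℓ, OverAt Dem N r b β q ℓ e := ⟨ℓ, h⟩
  refine mem_biUnion.2 ⟨Nat.find hex, mem_range.2 ((Nat.find_min' hex h).trans_lt hℓ), ?_⟩
  exact mem_filter.2 ⟨he, Nat.find_spec hex, fun ℓ' hℓ' => Nat.find_min hex hℓ'⟩

noncomputable def firstUnderRound (Dem : B → (ι → ℝ) → Finset ι → Finset ι) (N : List B)
    (r : B → ℕ) (b : ℕ → ℝ) (β : ℕ) (q : ι → ℝ) (e : ι) : Fin (β + 1) :=
  if h : ∃ ℓ < β, UnderAt Dem N r b β q ℓ e then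
    ⟨Nat.find h, (Nat.find_spec h).1.trans β.lt_succ_self⟩
  else Fin.last β

section FirstUnderRound

omit [DecidableEq B]

variable {Dem : B → (ι → ℝ) → Finset ι → Finset ι} {N : List B} {r : B → ℕ} {b : ℕ → ℝ}
  {β : ℕ} {q : ι → ℝ} {e : ι}

theorem underAt_firstUnderRound (h : (firstUnderRound Dem N r b β q e : ℕ) < β) :
    UnderAt Dem N r b β q (firstUnderRound Dem N r b β q e) e := by
  unfold firstUnderRound at h ⊢
  split_ifs at h ⊢ with hex
  · exact (Nat.find_spec hex).2
  · simp at h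

theorem not_underAt_of_not_firstUnderRound_lt
    (h : ¬ (firstUnderRound Dem N r b β q e : ℕ) < β) :
    ∀ ℓ < β, ¬ UnderAt Dem N r b β q ℓ e := by
  unfold firstUnderRound at h
  split_ifs at h with hex
  · exact absurd (Nat.find_spec hex).1 h
  · exact fun ℓ hℓ hU => hex ⟨ℓ, hℓ, hU⟩

end FirstUnderRound

omit [Fintype ι] in
theorem SubadditiveVal.le_sum_biUnion {v : Finset ι → ℝ} (hv : SubadditiveVal v)
    {κ : Type*} [DecidableEq κ] {s : Finset κ} (hs : s.Nonempty) (f : κ → Finset ι) :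
    v (s.biUnion f) ≤ ∑ k ∈ s, v (f k) := by
  induction hs using Finset.Nonempty.cons_induction with
  | singleton a => simp
  | cons a s ha hs ih =>
    rw [cons_eq_insert, biUnion_insert, sum_insert ha]
    exact (hv _ _).trans (by gcongr)

omit [Fintype ι] in
theorem SubadditiveVal.sub_priceOf_le_sum_fiberwise {v : Finset ι → ℝ} (hv : SubadditiveVal v)
    {κ : Type*} [Fintype κ] [DecidableEq κ] [Nonempty κ] (ρ : ι → κ) (q : ι → ℝ)
    (W : Finset ι) :
    v W - priceOf q W ≤
      ∑ k, (v (W.filter (ρ · = k)) - priceOf q (W.filter (ρ · = k))) := by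
  have hmaps : ∀ e ∈ W, ρ e ∈ (univ : Finset κ) := fun e _ => mem_univ _
  have hv' := hv.le_sum_biUnion univ_nonempty fun k => W.filter (ρ · = k)
  rw [biUnion_filter_eq_of_maps_to hmaps] at hv'
  have hq : priceOf q W = ∑ k, priceOf q (W.filter (ρ · = k)) :=
    (sum_fiberwise_of_maps_to hmaps q).symm
  rw [sum_sub_distrib]
  linarith

theorem sum_BSMutility_eq {v : B → Finset ι → ℝ} {Dem : B → (ι → ℝ) → Finset ι → Finset ι}
    {N : List B} {r : B → ℕ} {b : ℕ → ℝ} {β : ℕ} {i : B} {τ : Fin (β + 1)} (hr : r i = τ) :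
    ∑ ℓ : Fin (β + 1), BSMutility v Dem N r b β i ℓ = BSMutility v Dem N r b β i τ :=
  sum_eq_single τ (fun _ _ hℓ => if_neg (hr.trans_ne (Fin.val_ne_of_ne hℓ.symm)))
    (fun h => absurd (mem_univ τ) h)

theorem sub_priceOf_le_BSMutility {v : B → Finset ι → ℝ}
    {Dem : B → (ι → ℝ) → Finset ι → Finset ι} {s t : List B} {i : B} {r r' : B → ℕ}
    {b : ℕ → ℝ} {β τ : ℕ} {q : ι → ℝ} (hs : i ∉ s) (ht : i ∉ t) (hr : ∀ j ≠ i, r j = r' j)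
    (hri : r i = τ) (hτ : τ ≤ β) (hDem : ∀ p, IsDemandOracle (v i) p (Dem i p))
    {X : Finset ι}
    (hX : ∀ e ∈ X,
      e ∉ FPAsold (fun j => Dem j (BSMprice Dem (s ++ t) r' b β τ)) (BSMgroup s r' τ) univ ∧
        BSMprice Dem (s ++ t) r' b β τ e ≤ q e) :
    v i X - priceOf q X ≤ BSMutility v Dem (s ++ i :: t) r b β i τ := by
  subst hri
  set p := BSMprice Dem (s ++ t) r' b β (r i)
  have hprice : BSMprice Dem (s ++ i :: t) r b β (r i) = p := by
    refine BSMprice_congr Dem b β hτ fun u hu => ?_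
    rw [BSMgroup_filter_ne _ hr hu.ne', filter_ne_append_cons hs ht]
  have halloc : BSMfinalAlloc Dem (s ++ i :: t) r b β (r i) i =
      Dem i p (univ \ FPAsold (fun j => Dem j p) (BSMgroup s r' (r i)) univ) := by
    rw [BSMfinalAlloc, hprice, BSMgroup_append_cons_self hs hr,
      FPAalloc_append_cons _ (L₁ := BSMgroup s r' (r i)) fun h => hs (List.mem_of_mem_filter h)]
  have hXsub : X ⊆ univ \ FPAsold (fun j => Dem j p) (BSMgroup s r' (r i)) univ :=
    fun e he => mem_sdiff.2 ⟨mem_univ e, (hX e he).1⟩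
  calc v i X - priceOf q X ≤ v i X - priceOf p X :=
        sub_le_sub_left (sum_le_sum fun e he => (hX e he).2) _
    _ ≤ _ := (hDem p _).2 X hXsub
    _ = _ := by rw [BSMutility, if_pos rfl, halloc, hprice]

omit [DecidableEq B] in
theorem available_at_firstUnderRound [LinearOrder B]
    {Dem : B → (ι → ℝ) → Finset ι → Finset ι} {s t : List B} {i : B}
    (hs : ∀ j ∈ s, j < i) (ht : ∀ j ∈ t, i < j) {r : B → ℕ} {b : ℕ → ℝ} {β : ℕ} {q : ι → ℝ}
    {Sstar : Finset ι} {e : ι} {τ : Fin (β + 1)} (hb : StrictMonoOn b (Set.Iio (2 ^ β)))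
    (hq : ∃ j < 2 ^ β, b j = q e) (he : e ∈ Sstar)
    (hT : e ∉ Tset Dem (s ++ t) r b β q Sstar (fun j => j < i))
    (hτ : firstUnderRound Dem (s ++ t) r b β q e = τ) :
    e ∉ FPAsold (fun j => Dem j (BSMprice Dem (s ++ t) r b β τ)) (BSMgroup s r τ) univ ∧
      BSMprice Dem (s ++ t) r b β τ e ≤ q e := by
  subst hτ
  by_cases hlt : (firstUnderRound Dem (s ++ t) r b β q e : ℕ) < β
  · obtain ⟨hunsold, hle⟩ := underAt_firstUnderRound hlt
    refine ⟨fun h => hunsold ?_, hle⟩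
    rw [BSMsold, BSMgroup, List.filter_append]
    exact FPAsold_subset_append _ _ _ _ h
  · rw [show (firstUnderRound Dem (s ++ t) r b β q e : ℕ) = β by omega]
    have hnotO : ∀ ℓ < β, ¬ OverAt Dem (s ++ t) r b β q ℓ e := fun ℓ hℓ hO =>
      hT (mem_union_left _ (mem_biUnion_Oset_of_overAt he hℓ hO))
    obtain ⟨j, hj, hbj⟩ := hq
    have hfinal := BSMprice_final_eq Dem (s ++ t) r hb hj hbj fun ℓ hℓ =>
      ⟨hnotO ℓ hℓ, not_underAt_of_not_firstUnderRound_lt hlt ℓ hℓ⟩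
    refine ⟨fun hsold => hT (mem_union_right _ ?_), hfinal.le⟩
    refine mem_filter.2 ⟨mem_filter.2 ⟨he, hfinal⟩, ?_⟩
    convert hsold using 2
    rw [← BSMgroup_append_filter_lt hs ht]
    exact List.filter_congr fun j _ => decide_eq_decide.2 Iff.rfl

theorem claim_utility_lower_bound_general
    {ι : Type} [Fintype ι] [DecidableEq ι] (n β : ℕ)
    (v : Fin n → Finset ι → ℝ)
    (Dem : Fin n → (ι → ℝ) → Finset ι → Finset ι)
    (b : ℕ → ℝ) (q : ι → ℝ) (Sstar : Finset ι) (i₀ : Fin n)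
    (rminus : Fin n → Fin (β + 1))
    (hsub : SubadditiveVal (v i₀))
    (hbmono : ∀ j k : ℕ, j < k → k < 2 ^ β → b j < b k)
    (hq : ∀ e ∈ Sstar, ∃ j < 2 ^ β, b j = q e)
    (hDem : ∀ i p, IsDemandOracle (v i) p (Dem i p)) :
    ∀ S ⊆ Sstar,
      (((β : ℝ) + 1) ^ 2)⁻¹ *
          ∑ ri : Fin (β + 1), ∑ rs : Fin (β + 1),
            BSMutility v Dem (List.finRange n)
              (fun j => ((Function.update rminus i₀ ri) j : ℕ)) b β i₀ (rs : ℕ)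
        ≥ (((β : ℝ) + 1) ^ 2)⁻¹ *
            (v i₀ (S \ Tset Dem ((List.finRange n).filter fun j => j ≠ i₀)
                (fun j => (rminus j : ℕ)) b β q Sstar (fun j => j < i₀))
              - priceOf q (S \ Tset Dem ((List.finRange n).filter fun j => j ≠ i₀)
                (fun j => (rminus j : ℕ)) b β q Sstar (fun j => j < i₀))) := by
  intro S hS
  obtain ⟨s, t, hN, hs, ht⟩ :=
    (List.pairwise_lt_finRange n).exists_eq_append_cons (List.mem_finRange i₀)
  have hs' : i₀ ∉ s := fun h => lt_irrefl _ (hs _ h)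
  have ht' : i₀ ∉ t := fun h => lt_irrefl _ (ht _ h)
  have hb : StrictMonoOn b (Set.Iio (2 ^ β)) := fun j _ k hk hjk => hbmono j k hjk hk
  rw [hN, filter_ne_append_cons hs' ht']
  refine mul_le_mul_of_nonneg_left ?_ (by positivity)
  refine (hsub.sub_priceOf_le_sum_fiberwise
    (firstUnderRound Dem (s ++ t) (fun j => (rminus j : ℕ)) b β q) q _).trans
    (sum_le_sum fun τ _ => ?_)
  rw [sum_BSMutility_eq (τ := τ) (by simp)]
  refine sub_priceOf_le_BSMutility (r' := fun j => (rminus j : ℕ)) hs' ht'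
    (fun j hj => by simp [hj]) (by simp) τ.is_le (hDem i₀) fun e he => ?_
  obtain ⟨heW, hτ⟩ := mem_filter.1 he
  obtain ⟨heS, heT⟩ := mem_sdiff.1 heW
  exact available_at_firstUnderRound hs ht hb (hq e (hS heS)) (hS heS) heT hτ

/-- **Claim 4.3** (utility lower bound).  Same setup as Claim 4.2: the sets
`C, O_ℓ, U_ℓ, D, T` are defined from the run of `BinarySearchMechanism(N \ {i₀}, M, ψ)`
with the fixed rounds `rminus`, `D` using the bidders preceding `i₀` in the order of `N`.
If the valuation of bidder `i₀` is subadditive, then for every `S ⊆ Sstar`, in the actual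
mechanism (with bidder `i₀` included, i.e. with round assignment
`Function.update rminus i₀ ri`), the expectation over `r_{i₀}` and `r*` of bidder `i₀`'s
utility in the fixed price auction producing the final allocation is at least
`(1/(β+1)²)·(v_{i₀}(S \ T) − q(S \ T))`. -/
theorem claim_utility_lower_bound
    {ι : Type} [Fintype ι] [DecidableEq ι] (n β : ℕ) (ψ : ℝ)
    (v : Fin n → Finset ι → ℝ)
    (Dem : Fin n → (ι → ℝ) → Finset ι → Finset ι)
    (b : ℕ → ℝ) (q : ι → ℝ) (Sstar : Finset ι) (i₀ : Fin n)
    (rminus : Fin n → Fin (β + 1))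
    (hm : 2 ≤ Fintype.card ι)
    (hval : ∀ i, IsValuation (v i))
    (hsub : SubadditiveVal (v i₀))
    (hψpos : 0 < ψ)
    (hβ : 1 ≤ β)
    (hbmono : ∀ j k : ℕ, j < k → k < 2 ^ β → b j < b k)
    (hbnn : ∀ j < 2 ^ β, 0 ≤ b j)
    (hbB : ∀ x ∈ candB (Fintype.card ι) ψ, ∃ j < 2 ^ β, b j = x)
    (hq : ∀ e ∈ Sstar, ∃ j < 2 ^ β, b j = q e)
    (hDem : ∀ i p, IsDemandOracle (v i) p (Dem i p)) :
    ∀ S ⊆ Sstar,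
      (((β : ℝ) + 1) ^ 2)⁻¹ *
          ∑ ri : Fin (β + 1), ∑ rs : Fin (β + 1),
            BSMutility v Dem (List.finRange n)
              (fun j => ((Function.update rminus i₀ ri) j : ℕ)) b β i₀ (rs : ℕ)
        ≥ (((β : ℝ) + 1) ^ 2)⁻¹ *
            (v i₀ (S \ Tset Dem ((List.finRange n).filter fun j => j ≠ i₀)
                (fun j => (rminus j : ℕ)) b β q Sstar (fun j => j < i₀))
              - priceOf q (S \ Tset Dem ((List.finRange n).filter fun j => j ≠ i₀)
                (fun j => (rminus j : ℕ)) b β q Sstar (fun j => j < i₀))) :=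
  claim_utility_lower_bound_general n β v Dem b q Sstar i₀ rminus hsub hbmono hq hDem
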